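/- arXiv:1709.09130 — 3 statements merged into one kernel-verified Lean document; each statement's English description precedes it below -/
import Mathlib

section
/- Let F : ℝⁿ → ℝ be computed by a ReLU neural network and let x₀ ∈ ℝⁿ. The locally active region L(x₀) = { x ∈ ℝⁿ : for every layer i and neuron j, (W_i z_i(x) + b_i)_j ≥ 0 if and only if (W_i z_i(x₀) + b_i)_j ≥ 0 } can be written as a finite intersection of half-spaces with possibly strict inequalities; that is, there exist m ∈ ℕ, vectors a₁,…,a_m ∈ ℝⁿ, scalars c₁,…,c_m, and flags strict₁,…,strict_m ∈ {true,false} such that L(x₀) = { x : for every i, ⟨a_i, x⟩ < c_i if strict_i = true, and ⟨a_i, x⟩ ≤ c_i if strict_i = false }. -/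
/-- Componentwise ReLU: `σ(z) = max(z, 0)` applied to each coordinate. -/
noncomputable def reluVec {m : ℕ} (v : Fin m → ℝ) : Fin m → ℝ := fun j => max (v j) 0

/-- A feedforward ReLU network with `n` inputs, `k` hidden layers of `N` neurons
each, and a single output.  `W₀, b₀` connect the input to the first hidden layer,
`W i, b i` (used for `1 ≤ i ≤ k - 1`) connect hidden layer `i` to hidden layer
`i + 1`, and `Wout, bout` (the paper's `W_k, b_k`) connect the last hidden layer
to the output. -/
structure ReluNet (n N k : ℕ) where
  W₀ : Matrix (Fin N) (Fin n) ℝ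
  b₀ : Fin N → ℝ
  W : ℕ → Matrix (Fin N) (Fin N) ℝ
  b : ℕ → Fin N → ℝ
  Wout : Fin N → ℝ
  bout : ℝ

namespace ReluNet

variable {n N k : ℕ}

/-- `z net x i` is the paper's `z_{i+1}(x)`, the output of hidden layer `i + 1`:
`z₁ = σ(W₀ x + b₀)` and `z_{i+1} = σ(W_i z_i + b_i)`. -/
noncomputable def z (net : ReluNet n N k) (x : Fin n → ℝ) : ℕ → Fin N → ℝ
  | 0 => reluVec (net.W₀.mulVec x + net.b₀)
  | i + 1 => reluVec ((net.W (i + 1)).mulVec (z net x i) + net.b (i + 1))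

/-- `preact net x i` is the paper's pre-activation `W_i z_i(x) + b_i` of hidden
layer `i + 1`; neuron `j` of that layer is activated at `x` iff
`0 ≤ preact net x i j`. -/
noncomputable def preact (net : ReluNet n N k) (x : Fin n → ℝ) : ℕ → Fin N → ℝ
  | 0 => net.W₀.mulVec x + net.b₀
  | i + 1 => (net.W (i + 1)).mulVec (net.z x i) + net.b (i + 1)

/-- The function computed by the network: `F(x) = W_k z_k(x) + b_k`. -/
noncomputable def F (net : ReluNet n N k) (x : Fin n → ℝ) : ℝ :=
  (∑ j, net.Wout j * net.z x (k - 1) j) + net.bout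

end ReluNet

/-- The locally active region of `x₀`: the set of inputs activating exactly the
same neurons as `x₀` (neuron `j` of hidden layer `i + 1` is activated at `x` iff
`0 ≤ preact net x i j`). -/
def ReluNet.activeRegion {n N k : ℕ} (net : ReluNet n N k) (x₀ : Fin n → ℝ) :
    Set (Fin n → ℝ) :=
  {x | ∀ i < k, ∀ j, (0 ≤ net.preact x i j ↔ 0 ≤ net.preact x₀ i j)}

/-!
On the set of inputs whose first `i` layers have the same activation pattern as `x₀`, the ReLU of
layer `i` acts as the fixed diagonal 0/1 matrix of that pattern, so by induction the pre-activation
of every layer is an affine function of the input there. Agreeing in sign pattern with `x₀` at the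
next layer then adds, for each neuron, one affine half-space (closed if the neuron is active at
`x₀`, open otherwise).
-/

section Polyhedral

variable {n : ℕ}

def IsPolyhedral (S : Set (Fin n → ℝ)) : Prop :=
  ∃ (m : ℕ) (a : Fin m → Fin n → ℝ) (c : Fin m → ℝ) (strict : Fin m → Bool),
    S = {x | ∀ i, if strict i then (∑ j, a i j * x j) < c i
                  else (∑ j, a i j * x j) ≤ c i}

theorem isPolyhedral_univ : IsPolyhedral (Set.univ : Set (Fin n → ℝ)) :=
  ⟨0, Fin.elim0, Fin.elim0, Fin.elim0, by ext x; simp⟩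

theorem IsPolyhedral.inter {S T : Set (Fin n → ℝ)} (hS : IsPolyhedral S) (hT : IsPolyhedral T) :
    IsPolyhedral (S ∩ T) := by
  obtain ⟨m, a, c, strict, rfl⟩ := hS
  obtain ⟨m', a', c', strict', rfl⟩ := hT
  refine ⟨m + m', Fin.append a a', Fin.append c c', Fin.append strict strict', ?_⟩
  ext x
  simp only [Set.mem_inter_iff, Set.mem_ofPred_eq, Fin.forall_fin_add, Fin.append_left,
    Fin.append_right]

theorem IsPolyhedral.iInter {ι : Type*} [Fintype ι] {S : ι → Set (Fin n → ℝ)}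
    (hS : ∀ i, IsPolyhedral (S i)) : IsPolyhedral (⋂ i, S i) := by
  rw [← Set.iInf_eq_iInter, ← Finset.inf_univ_eq_iInf]
  exact Finset.inf_induction isPolyhedral_univ (fun _ h₁ _ h₂ => h₁.inter h₂) fun i _ => hS i

theorem isPolyhedral_halfspace (a : Fin n → ℝ) (c : ℝ) (strict : Bool) :
    IsPolyhedral {x | if strict then (∑ j, a j * x j) < c else (∑ j, a j * x j) ≤ c} :=
  ⟨1, fun _ => a, fun _ => c, fun _ => strict, by ext x; simp⟩

theorem AffineMap.apply_eq_sum_mul_add (f : (Fin n → ℝ) →ᵃ[ℝ] ℝ) (x : Fin n → ℝ) :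
    f x = (∑ j, f.linear (Pi.single j 1) * x j) + f 0 := by
  rw [congrFun f.decomp x, Pi.add_apply, f.linear.pi_apply_eq_sum_univ]
  congr 1
  refine Finset.sum_congr rfl fun j _ => ?_
  rw [smul_eq_mul, mul_comm]
  congr 2 with i
  simp [Pi.single_apply, eq_comm]

theorem isPolyhedral_setOf_affine (f : (Fin n → ℝ) →ᵃ[ℝ] ℝ) (strict : Bool) :
    IsPolyhedral {x | if strict then f x < 0 else f x ≤ 0} := by
  convert isPolyhedral_halfspace (fun j => f.linear (Pi.single j 1)) (-f 0) strict
    using 3 with x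
  rw [f.apply_eq_sum_mul_add]
  cases strict <;> simp only [Bool.false_eq_true, if_true, if_false] <;> constructor <;> intro <;>
    linarith

theorem isPolyhedral_setOf_nonneg_iff (f : (Fin n → ℝ) →ᵃ[ℝ] ℝ) (p : Prop) :
    IsPolyhedral {x | 0 ≤ f x ↔ p} := by
  by_cases hp : p
  · simpa [hp] using isPolyhedral_setOf_affine (-f) false
  · simpa [hp] using isPolyhedral_setOf_affine f true

end Polyhedral

theorem reluVec_eq_diagonal_mulVec {m : ℕ} {u v : Fin m → ℝ} (h : ∀ j, 0 ≤ v j ↔ 0 ≤ u j) :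
    reluVec v = (Matrix.diagonal fun j => if 0 ≤ u j then 1 else 0).mulVec v := by
  ext j
  rw [Matrix.mulVec_diagonal, reluVec]
  by_cases hu : 0 ≤ u j
  · simp [hu, (h j).2 hu]
  · simp [hu, (not_le.1 (mt (h j).1 hu)).le]

def affineLayer {m M : ℕ} (W : Matrix (Fin M) (Fin m) ℝ) (b : Fin M → ℝ) :
    (Fin m → ℝ) →ᵃ[ℝ] (Fin M → ℝ) :=
  W.mulVecLin.toAffineMap + AffineMap.const ℝ _ b

@[simp]
theorem affineLayer_apply {m M : ℕ} (W : Matrix (Fin M) (Fin m) ℝ) (b : Fin M → ℝ)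
    (v : Fin m → ℝ) : affineLayer W b v = W.mulVec v + b := by
  simp [affineLayer]

namespace ReluNet

variable {n N k : ℕ}

def activeRegionUpTo (net : ReluNet n N k) (x₀ : Fin n → ℝ) (i : ℕ) : Set (Fin n → ℝ) :=
  {x | ∀ i' < i, ∀ j, (0 ≤ net.preact x i' j ↔ 0 ≤ net.preact x₀ i' j)}

theorem activeRegionUpTo_succ (net : ReluNet n N k) (x₀ : Fin n → ℝ) (i : ℕ) :
    net.activeRegionUpTo x₀ (i + 1) = net.activeRegionUpTo x₀ i ∩
      ⋂ j, {x | 0 ≤ net.preact x i j ↔ 0 ≤ net.preact x₀ i j} := by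
  ext x
  simp only [activeRegionUpTo, Set.mem_inter_iff, Set.mem_iInter, Set.mem_ofPred_eq,
    Nat.lt_succ_iff_lt_or_eq, or_imp, forall_and, forall_eq]

theorem z_eq_reluVec_preact (net : ReluNet n N k) (x : Fin n → ℝ) (i : ℕ) :
    net.z x i = reluVec (net.preact x i) := by
  cases i <;> rfl

theorem exists_affineMap_eqOn_preact (net : ReluNet n N k) (x₀ : Fin n → ℝ) (i : ℕ) :
    ∃ g : (Fin n → ℝ) →ᵃ[ℝ] (Fin N → ℝ),
      Set.EqOn (net.preact · i) g (net.activeRegionUpTo x₀ i) := by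
  induction i with
  | zero => exact ⟨affineLayer net.W₀ net.b₀, fun x _ => by simp [preact]⟩
  | succ i ih =>
    obtain ⟨g, hg⟩ := ih
    let mask := Matrix.diagonal fun j => if 0 ≤ net.preact x₀ i j then (1 : ℝ) else 0
    refine ⟨(affineLayer (net.W (i + 1)) (net.b (i + 1))).comp
      (mask.mulVecLin.toAffineMap.comp g), fun x hx => ?_⟩
    rw [activeRegionUpTo_succ] at hx
    obtain ⟨hx, hpattern⟩ := hx
    have hz : net.z x i = mask.mulVec (g x) := by
      rw [z_eq_reluVec_preact, ← hg hx]
      exact reluVec_eq_diagonal_mulVec (Set.mem_iInter.1 hpattern)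
    simp [preact, hz]

theorem isPolyhedral_activeRegionUpTo (net : ReluNet n N k) (x₀ : Fin n → ℝ) (i : ℕ) :
    IsPolyhedral (net.activeRegionUpTo x₀ i) := by
  induction i with
  | zero => simpa [activeRegionUpTo] using isPolyhedral_univ
  | succ i ih =>
    obtain ⟨g, hg⟩ := net.exists_affineMap_eqOn_preact x₀ i
    have hcell : net.activeRegionUpTo x₀ i ∩
        ⋂ j, {x | 0 ≤ net.preact x i j ↔ 0 ≤ net.preact x₀ i j} =
        net.activeRegionUpTo x₀ i ∩ ⋂ j, {x | 0 ≤ g x j ↔ 0 ≤ net.preact x₀ i j} := by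
      ext x
      constructor <;> rintro ⟨hx, h⟩ <;> refine ⟨hx, ?_⟩ <;>
        simpa only [Set.mem_iInter, Set.mem_ofPred_eq, hg hx] using h
    rw [activeRegionUpTo_succ, hcell]
    exact ih.inter <| .iInter fun j =>
      isPolyhedral_setOf_nonneg_iff
        ((LinearMap.proj j : (Fin N → ℝ) →ₗ[ℝ] ℝ).toAffineMap.comp g) (0 ≤ net.preact x₀ i j)

end ReluNet

/-- The locally active region `L(x₀)` of a ReLU network is a finite intersection
of half-spaces with possibly strict inequalities: there are `a i ∈ ℝⁿ`, `c i ∈ ℝ`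
and flags `strict i` with `L(x₀) = {x | ∀ i, ⟨a i, x⟩ < c i if strict i,
and ⟨a i, x⟩ ≤ c i otherwise}`. -/
theorem activeRegion_is_polyhedron {n N k : ℕ} (net : ReluNet n N k)
    (x₀ : Fin n → ℝ) :
    ∃ (m : ℕ) (a : Fin m → Fin n → ℝ) (c : Fin m → ℝ) (strict : Fin m → Bool),
      net.activeRegion x₀ =
        {x | ∀ i, if strict i then (∑ j, a i j * x j) < c i
                  else (∑ j, a i j * x j) ≤ c i} :=
  net.isPolyhedral_activeRegionUpTo x₀ k
end

section
/- Let W ∈ ℝ^{N×n}, b, z ∈ ℝ^N, x ∈ ℝⁿ, and M ∈ ℝ with |(W x + b)_j| ≤ M for every j. Then z = σ(W x + b) (with σ(u) = max(u,0) componentwise) if and only if there exists t ∈ ℝ^N with t_j ∈ {0,1} for all j such that, componentwise, z ≥ W x + b, z ≤ W x + b + M·t, z ≥ 0, and z ≤ M·(1 − t). -/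
/-! For each neuron the binary `t j` selects the active branch (`t j = 0`, forcing
`z j = u` with `u = (W x + b) j`) or the inactive one (`t j = 1`, forcing `z j = 0`); the bound
`|u| ≤ M` makes the constraint of the other branch slack, so the layer decouples into
independent scalar equivalences. -/

section BigM

variable {α : Type*} [Field α] [LinearOrder α] [IsStrictOrderedRing α]

theorem eq_max_zero_iff_exists_bigM {u v M : α} (hu : |u| ≤ M) :
    v = max u 0 ↔
      ∃ t : α, (t = 0 ∨ t = 1) ∧ v ≥ u ∧ v ≤ u + M * t ∧ v ≥ 0 ∧ v ≤ M * (1 - t) := by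
  obtain ⟨hlo, hhi⟩ := abs_le.mp hu
  constructor
  · rintro rfl
    rcases le_total 0 u with hpos | hneg
    · refine ⟨0, .inl rfl, ?_⟩
      simp only [max_eq_left hpos, mul_zero, add_zero, sub_zero, mul_one]
      exact ⟨le_rfl, le_rfl, hpos, hhi⟩
    · refine ⟨1, .inr rfl, ?_⟩
      simp only [max_eq_right hneg, mul_one, sub_self, mul_zero]
      exact ⟨hneg, by linarith, le_rfl, le_rfl⟩
  · rintro ⟨t, rfl | rfl, hge, hle, hnn, hM⟩
    · simp only [mul_zero, add_zero] at hle
      rw [max_eq_left (hnn.trans hle)]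
      exact le_antisymm hle hge
    · simp only [sub_self, mul_zero] at hM
      rw [max_eq_right (hge.trans hM)]
      exact le_antisymm hM hnn

end BigM

/-- Big-M mixed-integer encoding of one ReLU layer: if `|(W x + b) j| ≤ M` for all
`j`, then `z = σ(W x + b)` (componentwise `σ(u) = max(u, 0)`) iff there is a
binary vector `t ∈ {0, 1}^N` such that componentwise `z ≥ W x + b`,
`z ≤ W x + b + M t`, `z ≥ 0` and `z ≤ M (1 - t)`. -/
theorem relu_layer_bigM_encoding {N n : ℕ}
    (W : Matrix (Fin N) (Fin n) ℝ) (b z : Fin N → ℝ) (x : Fin n → ℝ)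
    (M : ℝ) (hM : ∀ j, |(W.mulVec x + b) j| ≤ M) :
    z = (fun j => max ((W.mulVec x + b) j) 0) ↔
      ∃ t : Fin N → ℝ, (∀ j, t j = 0 ∨ t j = 1) ∧
        ∀ j, z j ≥ (W.mulVec x + b) j ∧
             z j ≤ (W.mulVec x + b) j + M * t j ∧
             z j ≥ 0 ∧
             z j ≤ M * (1 - t j) := by
  simp only [funext_iff, fun j => eq_max_zero_iff_exists_bigM (hM j), Classical.skolem, forall_and]
end

section
/- Let F : ℝⁿ → ℝ be computed by a ReLU neural network, let P ⊆ ℝⁿ, let u ∈ ℝ, and let M ∈ ℝ be such that for every x ∈ P, every layer i ∈ {0,…,k−1} and every neuron j, |(W_i z_i(x) + b_i)_j| ≤ M. Then there exists x ∈ P with F(x) ≥ u if and only if the following system of constraints is satisfiable: x ∈ P; vectors z₁,…,z_k ∈ ℝ^N and t₁,…,t_k ∈ {0,1}^N with, componentwise for each i ∈ {0,…,k−1} (writing z₀ = x), z_{i+1} ≥ W_i z_i + b_i, z_{i+1} ≤ W_i z_i + b_i + M·t_{i+1}, z_{i+1} ≥ 0, z_{i+1} ≤ M·(1 − t_{i+1});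 y = W_k z_k + b_k; and y ≥ u. -/

private lemma bigM_relu {p z t M : ℝ} (ht : t = 0 ∨ t = 1)
    (h1 : z ≥ p) (h2 : z ≤ p + M * t) (h3 : z ≥ 0) (h4 : z ≤ M * (1 - t)) :
    z = max p 0 := by
  rcases ht with h | h <;> subst h <;> simp only [mul_zero, add_zero, mul_one, sub_self,
    sub_zero] at h2 h4
  · have : z = p := le_antisymm h2 h1
    rw [this, max_eq_left (this ▸ h3)]
  · have : z = 0 := le_antisymm h4 h3
    rw [this, max_eq_right (this ▸ h1)]

/-- Soundness and completeness of the MILP feasibility encoding used by the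
GlobalSearch procedure: provided the big-M constant `M` bounds the absolute value
of every pre-activation of the network over `P`, the big-M constraint system
(input `x ∈ P`; for each hidden layer `i + 1` (for `i < k`, writing `zv i` for the
paper's `z_{i+1}` and `p` for its pre-activation `W_i z_i + b_i`, where `z₀ = x`):
binary `tv i`, `zv i ≥ p`, `zv i ≤ p + M·tv i`, `zv i ≥ 0`, `zv i ≤ M·(1 − tv i)`;
output `y = W_k z_k + b_k`; and `y ≥ u`) is satisfiable if and only if there
exists `x ∈ P` with `F x ≥ u`. -/
theorem reluNet_milp_encoding {n N k : ℕ} (net : ReluNet n N k) (hk : 0 < k)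
    (P : Set (Fin n → ℝ)) (u M : ℝ)
    (hM : ∀ x ∈ P, ∀ i < k, ∀ j, |net.preact x i j| ≤ M) :
    (∃ (x : Fin n → ℝ) (zv tv : ℕ → Fin N → ℝ) (y : ℝ),
        x ∈ P ∧
        (∀ i < k, ∀ j, tv i j = 0 ∨ tv i j = 1) ∧
        (∀ i < k, ∀ j,
          let p : ℝ :=
            if i = 0 then (net.W₀.mulVec x + net.b₀) j
            else ((net.W i).mulVec (zv (i - 1)) + net.b i) j
          zv i j ≥ p ∧ zv i j ≤ p + M * tv i j ∧
          zv i j ≥ 0 ∧ zv i j ≤ M * (1 - tv i j)) ∧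
        y = (∑ j, net.Wout j * zv (k - 1) j) + net.bout ∧
        y ≥ u) ↔
      ∃ x ∈ P, net.F x ≥ u := by
  constructor
  · rintro ⟨x, zv, tv, y, hxP, ht, hc, hy, hyu⟩
    refine ⟨x, hxP, ?_⟩
    have hz : ∀ i, i < k → zv i = net.z x i := by
      intro i
      induction i with
      | zero =>
        intro hi
        funext j
        obtain ⟨h1, h2, h3, h4⟩ := hc 0 hi j
        simp only [if_pos rfl] at h1 h2
        exact bigM_relu (ht 0 hi j) h1 h2 h3 h4
      | succ m ih =>
        intro hi
        have hm : m < k := Nat.lt_of_succ_lt hi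
        funext j
        obtain ⟨h1, h2, h3, h4⟩ := hc (m + 1) hi j
        simp only [Nat.succ_ne_zero, if_neg, Nat.add_sub_cancel, ih hm] at h1 h2
        exact bigM_relu (ht (m + 1) hi j) h1 h2 h3 h4
    have hkk : k - 1 < k := Nat.sub_lt hk one_pos
    have : net.F x = y := by
      rw [ReluNet.F, hy, hz (k - 1) hkk]
    linarith
  · rintro ⟨x, hxP, hF⟩
    refine ⟨x, fun i => net.z x i, fun i j => if 0 ≤ net.preact x i j then 0 else 1,
      net.F x, hxP, ?_, ?_, rfl, hF⟩
    · intro i _ j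
      simp only []
      split <;> simp
    · intro i hi j
      have hp : (if i = 0 then (net.W₀.mulVec x + net.b₀) j
          else ((net.W i).mulVec (net.z x (i - 1)) + net.b i) j) = net.preact x i j := by
        rcases i with _ | m
        · simp [ReluNet.preact]
        · simp [ReluNet.preact]
      have hzz : net.z x i j = max (net.preact x i j) 0 := by
        rcases i with _ | m
        · simp [ReluNet.z, ReluNet.preact, reluVec]
        · simp [ReluNet.z, ReluNet.preact, reluVec]
      have hMb := hM x hxP i hi j
      rw [abs_le] at hMb
      simp only [hp, hzz]
      by_cases h : 0 ≤ net.preact x i j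
      · rw [if_pos h, max_eq_left h]
        refine ⟨le_rfl, by linarith, h, by linarith [hMb.2]⟩
      · rw [if_neg h, max_eq_right (le_of_not_ge h)]
        push_neg at h
        refine ⟨le_of_lt h, by linarith [hMb.1], le_rfl, by linarith⟩
end
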